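/- There exists a real constant c ≠ 0, independent of k and l, such that for all k, l ∈ ℤ²₊ the vector field b(e_k¹, e_l¹) + b(e_l¹, e_k¹) − b(e_l⁰, e_k⁰) − b(e_k⁰, e_l⁰) equals a(k,l) · c · ((|l|² − |k|²)/|k+l|) · e¹_{k+l} modulo a gradient. (This is the fourth identity of the velocity-direction Lie bracket lemma: J_{k,l}^{1,1} − J_{l,k}^{0,0} = a c ((|l|²−|k|²)/|k+l|) ψ¹_{k+l}.) -/

import Mathlib

/-- Euclidean norm of an integer lattice vector `k ∈ ℤ²`. -/
noncomputable def knorm (k : ℤ × ℤ) : ℝ := Real.sqrt ((k.1 : ℝ) ^ 2 + (k.2 : ℝ) ^ 2)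

/-- The phase `k ⋅ x = k₁ x₁ + k₂ x₂`. -/
noncomputable def phase (k : ℤ × ℤ) (x : ℝ × ℝ) : ℝ := (k.1 : ℝ) * x.1 + (k.2 : ℝ) * x.2

/-- The divergence-free trigonometric vector field
`e_k⁰(x) = |k|⁻¹ (k₂, −k₁) cos(k ⋅ x)`. -/
noncomputable def e0 (k : ℤ × ℤ) (x : ℝ × ℝ) : ℝ × ℝ :=
  (((k.2 : ℝ) / knorm k) * Real.cos (phase k x),
   ((-(k.1 : ℝ)) / knorm k) * Real.cos (phase k x))

/-- The divergence-free trigonometric vector field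
`e_k¹(x) = |k|⁻¹ (−k₂, k₁) sin(k ⋅ x)`. -/
noncomputable def e1 (k : ℤ × ℤ) (x : ℝ × ℝ) : ℝ × ℝ :=
  (((-(k.2 : ℝ)) / knorm k) * Real.sin (phase k x),
   ((k.1 : ℝ) / knorm k) * Real.sin (phase k x))

/-- The advection operator `b(u,v) = (u ⋅ ∇)v`, i.e. the derivative of `v`
in the direction `u(x)`. -/
noncomputable def advect (u v : ℝ × ℝ → ℝ × ℝ) (x : ℝ × ℝ) : ℝ × ℝ :=
  fderiv ℝ v x (u x)

/-- The coefficient `a(k,l) = ⟨k, l^⊥⟩ / (|k| |l|)` with `l^⊥ = (−l₂, l₁)`. -/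
noncomputable def acoef (k l : ℤ × ℤ) : ℝ :=
  ((k.1 : ℝ) * (-(l.2 : ℝ)) + (k.2 : ℝ) * (l.1 : ℝ)) / (knorm k * knorm l)

/-- The half lattice `ℤ²₊ = {j ∈ ℤ² \ {0} : j₁ > 0, or j₁ = 0 and j₂ > 0}`. -/
def Zpos : Set (ℤ × ℤ) := {j | 0 < j.1 ∨ (j.1 = 0 ∧ 0 < j.2)}

/-- `F` equals `G` modulo a gradient: there exists a smooth `2π`-periodic
function `p : ℝ² → ℝ` with `F = G + ∇p`. -/
def EqModGrad (F G : ℝ × ℝ → ℝ × ℝ) : Prop :=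
  ∃ p : ℝ × ℝ → ℝ, ContDiff ℝ (⊤ : ℕ∞) p ∧
    (∀ x : ℝ × ℝ, p (x.1 + 2 * Real.pi, x.2) = p x ∧ p (x.1, x.2 + 2 * Real.pi) = p x) ∧
    ∀ x : ℝ × ℝ, F x = G x + (fderiv ℝ p x (1, 0), fderiv ℝ p x (0, 1))

noncomputable def phaseCLM (l : ℤ × ℤ) : (ℝ × ℝ) →L[ℝ] ℝ :=
  (l.1 : ℝ) • (ContinuousLinearMap.fst ℝ ℝ ℝ) + (l.2 : ℝ) • (ContinuousLinearMap.snd ℝ ℝ ℝ)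

lemma phaseCLM_apply (l : ℤ × ℤ) (u : ℝ × ℝ) :
    phaseCLM l u = (l.1 : ℝ) * u.1 + (l.2 : ℝ) * u.2 := by
  simp [phaseCLM, smul_eq_mul]

lemma hasFDerivAt_phase (l : ℤ × ℤ) (x : ℝ × ℝ) : HasFDerivAt (phase l) (phaseCLM l) x := by
  have h : phase l = fun y : ℝ × ℝ => phaseCLM l y := by
    funext y; simp [phase, phaseCLM_apply]
  rw [h]
  exact (phaseCLM l).hasFDerivAt

lemma hasFDerivAt_e1 (l : ℤ × ℤ) (x : ℝ × ℝ) :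
    HasFDerivAt (e1 l) ((Real.cos (phase l x) • phaseCLM l).smulRight
      (((-(l.2 : ℝ)) / knorm l, (l.1 : ℝ) / knorm l))) x := by
  have h := ((hasFDerivAt_phase l x).sin).smul_const
      (((-(l.2 : ℝ)) / knorm l, (l.1 : ℝ) / knorm l))
  refine h.congr_of_eventuallyEq (Filter.Eventually.of_forall fun y => ?_)
  simp [e1, Prod.smul_def, smul_eq_mul, mul_comm]

lemma hasFDerivAt_e0 (l : ℤ × ℤ) (x : ℝ × ℝ) :
    HasFDerivAt (e0 l) (((-Real.sin (phase l x)) • phaseCLM l).smulRight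
      (((l.2 : ℝ) / knorm l, (-(l.1 : ℝ)) / knorm l))) x := by
  have h := ((hasFDerivAt_phase l x).cos).smul_const
      (((l.2 : ℝ) / knorm l, (-(l.1 : ℝ)) / knorm l))
  refine h.congr_of_eventuallyEq (Filter.Eventually.of_forall fun y => ?_)
  simp [e0, Prod.smul_def, smul_eq_mul, mul_comm]

lemma fderiv_e1_apply (l : ℤ × ℤ) (x u : ℝ × ℝ) :
    fderiv ℝ (e1 l) x u =
      (((-(l.2 : ℝ)) / knorm l) * (Real.cos (phase l x) * ((l.1 : ℝ) * u.1 + (l.2 : ℝ) * u.2)),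
       ((l.1 : ℝ) / knorm l) * (Real.cos (phase l x) * ((l.1 : ℝ) * u.1 + (l.2 : ℝ) * u.2))) := by
  rw [(hasFDerivAt_e1 l x).fderiv]
  simp [ContinuousLinearMap.smulRight_apply, phaseCLM_apply, Prod.smul_def, smul_eq_mul]
  constructor <;> ring

lemma fderiv_e0_apply (l : ℤ × ℤ) (x u : ℝ × ℝ) :
    fderiv ℝ (e0 l) x u =
      (((l.2 : ℝ) / knorm l) * (-Real.sin (phase l x) * ((l.1 : ℝ) * u.1 + (l.2 : ℝ) * u.2)),
       ((-(l.1 : ℝ)) / knorm l) * (-Real.sin (phase l x) * ((l.1 : ℝ) * u.1 + (l.2 : ℝ) * u.2))) := by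
  rw [(hasFDerivAt_e0 l x).fderiv]
  simp [ContinuousLinearMap.smulRight_apply, phaseCLM_apply, Prod.smul_def, smul_eq_mul]
  constructor <;> ring

lemma knorm_pos {k : ℤ × ℤ} (hk : k ∈ Zpos) : 0 < knorm k := by
  have h : (0 : ℝ) < (k.1 : ℝ) ^ 2 + (k.2 : ℝ) ^ 2 := by
    rcases hk with h1 | ⟨h1, h2⟩
    · have : (1 : ℝ) ≤ (k.1 : ℝ) := by exact_mod_cast h1
      nlinarith [sq_nonneg ((k.2 : ℝ))]
    · have : (1 : ℝ) ≤ (k.2 : ℝ) := by exact_mod_cast h2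
      nlinarith [sq_nonneg ((k.1 : ℝ))]
  exact Real.sqrt_pos.mpr h

lemma knorm_sq (k : ℤ × ℤ) : knorm k ^ 2 = (k.1 : ℝ) ^ 2 + (k.2 : ℝ) ^ 2 := by
  rw [knorm, Real.sq_sqrt]; positivity

lemma add_mem_Zpos {k l : ℤ × ℤ} (hk : k ∈ Zpos) (hl : l ∈ Zpos) : k + l ∈ Zpos := by
  rcases hk with h1 | ⟨h1, h2⟩ <;> rcases hl with g1 | ⟨g1, g2⟩ <;>
    simp only [Zpos, Set.mem_setOf_eq, Prod.fst_add, Prod.snd_add] <;> omega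

theorem velocity_lie_bracket_diff_minus :
    ∃ c : ℝ, c ≠ 0 ∧ ∀ k l : ℤ × ℤ, k ∈ Zpos → l ∈ Zpos →
      EqModGrad
        (fun x => advect (e1 k) (e1 l) x + advect (e1 l) (e1 k) x - advect (e0 l) (e0 k) x - advect (e0 k) (e0 l) x)
        (fun x => (acoef k l * c * ((knorm l ^ 2 - knorm k ^ 2) / knorm (k + l))) • e1 (k + l) x) := by
  refine ⟨-1, by norm_num, fun k l hk hl => ?_⟩
  set m := k + l with hm
  have hmZ : m ∈ Zpos := add_mem_Zpos hk hl
  have hK : 0 < knorm k := knorm_pos hk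
  have hL : 0 < knorm l := knorm_pos hl
  have hM : 0 < knorm m := knorm_pos hmZ
  set A : ℝ := (k.1 : ℝ) * (-(l.2 : ℝ)) + (k.2 : ℝ) * (l.1 : ℝ) with hA
  set C : ℝ := 2 * A ^ 2 / (knorm k * knorm l * knorm m ^ 2) with hC
  refine ⟨fun x => C * Real.cos (phase m x), ?_, ?_, ?_⟩
  · have : ContDiff ℝ (⊤ : ℕ∞) (phase m) := by
      unfold phase
      exact (contDiff_const.mul contDiff_fst).add (contDiff_const.mul contDiff_snd)
    exact contDiff_const.mul (Real.contDiff_cos.comp this)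
  · intro x
    constructor
    · have h1 : phase m (x.1 + 2 * Real.pi, x.2) = phase m x + (m.1 : ℝ) * (2 * Real.pi) := by
        simp only [phase]; ring
      show C * Real.cos (phase m (x.1 + 2 * Real.pi, x.2)) = C * Real.cos (phase m x)
      rw [h1, Real.cos_add_int_mul_two_pi]
    · have h1 : phase m (x.1, x.2 + 2 * Real.pi) = phase m x + (m.2 : ℝ) * (2 * Real.pi) := by
        simp only [phase]; ring
      show C * Real.cos (phase m (x.1, x.2 + 2 * Real.pi)) = C * Real.cos (phase m x)
      rw [h1, Real.cos_add_int_mul_two_pi]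
  · intro x
    have hp : ∀ u : ℝ × ℝ, fderiv ℝ (fun y => C * Real.cos (phase m y)) x u
        = C * (-Real.sin (phase m x) * ((m.1 : ℝ) * u.1 + (m.2 : ℝ) * u.2)) := by
      intro u
      rw [(((hasFDerivAt_phase m x).cos).const_mul C).fderiv]
      simp [phaseCLM_apply, smul_eq_mul]
      try ring
    simp only [advect, fderiv_e1_apply, fderiv_e0_apply, hp]
    have hsm : Real.sin (phase m x) =
        Real.sin (phase k x) * Real.cos (phase l x) + Real.cos (phase k x) * Real.sin (phase l x) := by
      have : phase m x = phase k x + phase l x := by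
        simp only [phase, hm, Prod.fst_add, Prod.snd_add]; push_cast; ring
      rw [this, Real.sin_add]
    have hk2 := knorm_sq k
    have hl2 := knorm_sq l
    have hm2 : knorm m ^ 2 = ((k.1 : ℝ) + l.1) ^ 2 + ((k.2 : ℝ) + l.2) ^ 2 := by
      rw [knorm_sq m]; simp only [hm, Prod.fst_add, Prod.snd_add]; push_cast; ring
    have hm1 : ((m.1 : ℤ) : ℝ) = (k.1 : ℝ) + l.1 := by simp only [hm, Prod.fst_add, Prod.snd_add]; push_cast; ring
    have hm2' : ((m.2 : ℤ) : ℝ) = (k.2 : ℝ) + l.2 := by simp only [hm, Prod.fst_add, Prod.snd_add]; push_cast; ring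
    have hm2'' : knorm (k + l) ^ 2 = ((k.1 : ℝ) + l.1) ^ 2 + ((k.2 : ℝ) + l.2) ^ 2 := by
      rw [knorm_sq (k + l)]; simp only [Prod.fst_add, Prod.snd_add]; push_cast; ring
    have hM' : 0 < knorm (k + l) := hM
    simp only [e1, e0, acoef, Prod.smul_mk, smul_eq_mul, Prod.mk_add_mk, Prod.mk_sub_mk,
      Prod.mk.injEq]
    rw [hsm, hm1, hm2']
    set K := knorm k with hKdef
    set L := knorm l with hLdef
    set M := knorm (k + l) with hMdef
    set sk := Real.sin (phase k x)
    set ck := Real.cos (phase k x)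
    set sl := Real.sin (phase l x)
    set cl := Real.cos (phase l x)
    rw [hC, hA]
    constructor
    · trans (((k.1 : ℝ) * -(l.2 : ℝ) + (k.2 : ℝ) * (l.1 : ℝ)) / (K * L) * (((l.2 : ℝ) - k.2) * (sk * cl + ck * sl)))
      · field_simp
        ring
      · field_simp [hK.ne', hL.ne', hM'.ne']
        linear_combination ((-((k.1:ℝ)*(l.2:ℝ))+(k.2:ℝ)*(l.1:ℝ)) * (sk*cl+ck*sl)) *
          (((l.2:ℝ)-(k.2:ℝ)) * hm2'' + ((k.2:ℝ)+(l.2:ℝ)) * hk2 - ((k.2:ℝ)+(l.2:ℝ)) * hl2)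
    · trans (((k.1 : ℝ) * -(l.2 : ℝ) + (k.2 : ℝ) * (l.1 : ℝ)) / (K * L) * (((k.1 : ℝ) - l.1) * (sk * cl + ck * sl)))
      · field_simp
        ring
      · field_simp [hK.ne', hL.ne', hM'.ne']
        linear_combination ((-((k.1:ℝ)*(l.2:ℝ))+(k.2:ℝ)*(l.1:ℝ)) * (sk*cl+ck*sl)) *
          (((k.1:ℝ)-(l.1:ℝ)) * hm2'' - ((k.1:ℝ)+(l.1:ℝ)) * hk2 + ((k.1:ℝ)+(l.1:ℝ)) * hl2)
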